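/- arXiv:math/0502027 — 2 statements merged into one kernel-verified Lean document; each statement's English description precedes it below -/
import Mathlib

section
/- Writing f = Σ a_k z^k/k! and g = Σ b_k z^k/k! (with a_k = f^{(k)}(0), b_k = g^{(k)}(0)), the ⋆-product satisfies (f ⋆ g)(z) = Σ_{k=0}^{n} (Σ_{j=0}^{n−k} a_{k+j} b_{n−j}) z^k/k!. -/
open Polynomial

/-- `P n` is the space of complex polynomials of degree at most `n`. -/
noncomputable def Pn (n : ℕ) : Submodule ℂ (Polynomial ℂ) := Polynomial.degreeLT ℂ (n + 1)

noncomputable instance instPnEndAddCommGroup (n : ℕ) : AddCommGroup (Module.End ℂ (Pn n)) :=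
  LinearMap.addCommGroup

noncomputable instance instPnEndRing (n : ℕ) : Ring (Module.End ℂ (Pn n)) := Module.End.instRing

/-- The differentiation operator on `Pn n`. -/
noncomputable def Dop (n : ℕ) : Module.End ℂ (Pn n) :=
  (Polynomial.derivative (R := ℂ)).restrict (p := Pn n) (q := Pn n)
    (fun f hf => by
      simp only [Pn, Polynomial.mem_degreeLT] at *
      exact lt_of_le_of_lt (Polynomial.degree_derivative_le) hf)

/-- `calD n` is the span of `I, D, D^2, ..., D^n` in `L(Pn n)`. -/
noncomputable def calD (n : ℕ) : Submodule ℂ (Module.End ℂ (Pn n)) :=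
  Submodule.span ℂ (Set.range fun k : Fin (n + 1) => (Dop n) ^ (k : ℕ))

/-- `φ_k(z) = z^k / k!` as an element of `Pn n` (for `k ≤ n`). -/
noncomputable def phiP (n k : ℕ) (h : k ≤ n) : Pn n :=
  ⟨Polynomial.C (((Nat.factorial k : ℂ))⁻¹) * Polynomial.X ^ k, by
    rw [Pn, Polynomial.mem_degreeLT]
    exact lt_of_le_of_lt (Polynomial.degree_C_mul_X_pow_le _ _)
      (by exact_mod_cast Nat.lt_succ_of_le h)⟩

/-!
Every `F ∈ 𝒟(P_n)` is a combination `∑ cᵢ Dⁱ`; evaluating `F φ_n = ∑ cᵢ φ_{n-i}` shows that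
`cᵢ = f^{(n-i)}(0)`, so `F p = ∑ᵢ a_{n-i} p^{(i)}` for every `p ∈ P_n`. Hence
`(f ⋆ g) = F (G φ_n) = F g = ∑ᵢ a_{n-i} g^{(i)}`, whose `k`-th derivative at `0` is
`∑ᵢ a_{n-i} b_{k+i}`; Taylor's formula at `0` and the substitution `i = n - k - j` (the terms with
`k + i > n` vanish since `deg g ≤ n`) give the stated coordinates.
-/

open Finset
open scoped Nat

theorem Finset.sum_range_sub_mul_add_eq {R : Type*} [NonUnitalNonAssocSemiring R]
    (a b : ℕ → R) {n k : ℕ} (hb : ∀ m, n < m → b m = 0) (hk : k ≤ n) :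
    ∑ i ∈ range (n + 1), a (n - i) * b (k + i) =
      ∑ j ∈ range (n - k + 1), a (k + j) * b (n - j) := by
  rw [← sum_subset (range_subset_range.2 (by omega : n - k + 1 ≤ n + 1)) fun i _ hi => by
    rw [mem_range] at hi; rw [hb _ (by omega), mul_zero], ← sum_range_reflect]
  refine sum_congr rfl fun j hj => ?_
  rw [mem_range] at hj
  congr 2 <;> omega

namespace Polynomial

theorem iterate_derivative_eval_zero {R : Type*} [Semiring R] (p : R[X]) (m : ℕ) :
    (derivative^[m] p).eval 0 = m ! * p.coeff m := by
  rw [← coeff_zero_eq_eval_zero, coeff_iterate_derivative, zero_add, Nat.descFactorial_self,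
    nsmul_eq_mul]

section CharZero

variable {K : Type*} [Field K] [CharZero K]

theorem eq_sum_range_iterate_derivative_eval_zero {p : K[X]} {n : ℕ} (hp : p.natDegree ≤ n) :
    p = ∑ k ∈ range (n + 1), C ((derivative^[k] p).eval 0 * (k ! : K)⁻¹) * X ^ k := by
  conv_lhs => rw [as_sum_range' p (n + 1) (Nat.lt_succ_of_le hp)]
  refine sum_congr rfl fun k _ => ?_
  rw [iterate_derivative_eval_zero, mul_comm (k ! : K),
    mul_inv_cancel_right₀ (Nat.cast_ne_zero.2 k.factorial_ne_zero), C_mul_X_pow_eq_monomial]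

theorem iterate_derivative_eval_zero_inv_factorial_mul_X_pow (k m : ℕ) :
    (derivative^[m] (C (k ! : K)⁻¹ * X ^ k)).eval 0 = if m = k then 1 else 0 := by
  rw [iterate_derivative_eval_zero, coeff_C_mul_X_pow]
  split_ifs with h
  · subst h
    exact mul_inv_cancel₀ (Nat.cast_ne_zero.2 m.factorial_ne_zero)
  · exact mul_zero _

theorem sum_C_mul_iterate_derivative_eq_sum_range {f g : K[X]} {n : ℕ} (hg : g.natDegree ≤ n) :
    ∑ i ∈ range (n + 1), C ((derivative^[n - i] f).eval 0) * derivative^[i] g =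
      ∑ k ∈ range (n + 1), C ((∑ j ∈ range (n - k + 1),
          (derivative^[k + j] f).eval 0 * (derivative^[n - j] g).eval 0) * (k ! : K)⁻¹) *
        X ^ k := by
  set h := ∑ i ∈ range (n + 1), C ((derivative^[n - i] f).eval 0) * derivative^[i] g
  have h_natDegree : h.natDegree ≤ n := natDegree_sum_le_of_forall_le _ _ fun i _ =>
    (natDegree_C_mul_le _ _).trans
      ((natDegree_iterate_derivative g i).trans ((Nat.sub_le _ _).trans hg))
  have h_iterate_derivative (k : ℕ) : (derivative^[k] h).eval 0 =
      ∑ i ∈ range (n + 1), (derivative^[n - i] f).eval 0 * (derivative^[k + i] g).eval 0 := by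
    simp only [h, iterate_derivative_sum, iterate_derivative_C_mul, ← Function.iterate_add_apply,
      eval_finsetSum, eval_mul, eval_C]
  refine (eq_sum_range_iterate_derivative_eval_zero h_natDegree).trans
    (sum_congr rfl fun k hk => ?_)
  rw [h_iterate_derivative, sum_range_sub_mul_add_eq (fun m => (derivative^[m] f).eval 0)
    (fun m => (derivative^[m] g).eval 0) (fun m hm => ?_) (Nat.lt_succ_iff.1 (mem_range.1 hk))]
  rw [iterate_derivative_eq_zero (hg.trans_lt hm), eval_zero]

end CharZero

end Polynomial

theorem coe_phiP (n k : ℕ) (h : k ≤ n) :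
    (phiP n k h : ℂ[X]) = C (k ! : ℂ)⁻¹ * X ^ k := rfl

theorem coe_Dop_pow_apply (n i : ℕ) (p : Pn n) :
    ((Dop n ^ i) p : ℂ[X]) = derivative^[i] (p : ℂ[X]) := by
  rw [Dop, Module.End.pow_restrict]
  exact Module.End.pow_apply _ _ _

theorem coe_sum_smul_Dop_pow_apply {n : ℕ} (c : Fin (n + 1) → ℂ) (p : Pn n) :
    ((∑ i, c i • Dop n ^ (i : ℕ)) p : ℂ[X]) = ∑ i, C (c i) * derivative^[i] (p : ℂ[X]) := by
  simp only [LinearMap.sum_apply, LinearMap.smul_apply, Submodule.coe_sum, Submodule.coe_smul,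
    coe_Dop_pow_apply, smul_eq_C_mul]

theorem iterate_derivative_eval_zero_sum_smul_Dop_pow_phiP {n : ℕ} (c : Fin (n + 1) → ℂ)
    (i : Fin (n + 1)) :
    (derivative^[n - i] ((∑ l, c l • Dop n ^ (l : ℕ)) (phiP n n le_rfl) : ℂ[X])).eval 0 = c i := by
  simp only [coe_sum_smul_Dop_pow_apply, iterate_derivative_sum, iterate_derivative_C_mul,
    ← Function.iterate_add_apply, eval_finsetSum, eval_mul, eval_C]
  simp only [coe_phiP, iterate_derivative_eval_zero_inv_factorial_mul_X_pow]
  rw [Fintype.sum_eq_single i fun l hl => by rw [if_neg (by omega), mul_zero], if_pos (by omega),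
    mul_one]

theorem coe_apply_eq_sum_of_mem_calD {n : ℕ} {F : Module.End ℂ (Pn n)} (hF : F ∈ calD n)
    (p : Pn n) :
    (F p : ℂ[X]) = ∑ i ∈ range (n + 1),
      C ((derivative^[n - i] (F (phiP n n le_rfl) : ℂ[X])).eval 0) * derivative^[i] (p : ℂ[X]) := by
  obtain ⟨c, rfl⟩ := (Submodule.mem_span_range_iff_exists_fun ℂ).1 hF
  rw [coe_sum_smul_Dop_pow_apply, sum_range]
  simp only [iterate_derivative_eval_zero_sum_smul_Dop_pow_phiP]

theorem star_product_coordinates_general (n : ℕ)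
    (F G : Module.End ℂ (Pn n)) (hF : F ∈ calD n)
    (f g : Pn n) (hFf : F (phiP n n le_rfl) = f) (hGg : G (phiP n n le_rfl) = g) :
    (((F * G) (phiP n n le_rfl) : Pn n) : Polynomial ℂ) =
      ∑ k ∈ Finset.range (n + 1),
        Polynomial.C ((∑ j ∈ Finset.range (n - k + 1),
            (Polynomial.derivative^[k + j] (f : Polynomial ℂ)).eval 0 *
            (Polynomial.derivative^[n - j] (g : Polynomial ℂ)).eval 0) *
          ((Nat.factorial k : ℂ))⁻¹) * Polynomial.X ^ k := by
  have hg : (g : ℂ[X]).natDegree ≤ n :=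
    natDegree_le_of_degree_le (mem_degreeLE.1 (degreeLT_succ_eq_degreeLE (R := ℂ) ▸ g.2))
  rw [Module.End.mul_apply, hGg, coe_apply_eq_sum_of_mem_calD hF, hFf]
  exact sum_C_mul_iterate_derivative_eq_sum_range hg

/-- Coordinate formula for the `⋆`-product: writing `f = Σ a_k z^k/k!`, `g = Σ b_k z^k/k!`
with `a_k = f^{(k)}(0)`, `b_k = g^{(k)}(0)`, one has
`(f ⋆ g)(z) = Σ_{k=0}^{n} (Σ_{j=0}^{n-k} a_{k+j} b_{n-j}) z^k/k!`.
Here `f ⋆ g = (F * G) φ_n` where `F, G ∈ 𝒟(P_n)` satisfy `Fφ_n = f`, `Gφ_n = g`. -/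
theorem star_product_coordinates (n : ℕ) (hn : 0 < n)
    (F G : Module.End ℂ (Pn n)) (hF : F ∈ calD n) (hG : G ∈ calD n)
    (f g : Pn n) (hFf : F (phiP n n le_rfl) = f) (hGg : G (phiP n n le_rfl) = g) :
    (((F * G) (phiP n n le_rfl) : Pn n) : Polynomial ℂ) =
      ∑ k ∈ Finset.range (n + 1),
        Polynomial.C ((∑ j ∈ Finset.range (n - k + 1),
            (Polynomial.derivative^[k + j] (f : Polynomial ℂ)).eval 0 *
            (Polynomial.derivative^[n - j] (g : Polynomial ℂ)).eval 0) *
          ((Nat.factorial k : ℂ))⁻¹) * Polynomial.X ^ k :=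
  star_product_coordinates_general n F G hF f g hFf hGg
end

section
/- Let T : P_n → P_n be a nonzero linear operator such that there exists C > 0 with: for every nonconstant f ∈ P_n there exist a root u of f and a root v of Tf with |u − v| ≤ C. Then deg(Tφ_m) = m for every m = 0, ..., n; in particular the matrix of T in the basis {1, z, z²/2!, ..., zⁿ/n!} is upper triangular with all diagonal entries equal to the nonzero constant Tφ_0. -/
/-!
For `t ∈ ℂ` the polynomial `(z - t)^m / m! = ∑_{j ≤ m} (-t)^(m-j)/(m-j)! φ_j` has `t` as its only
root, so `∑_{j ≤ m} (-t)^(m-j)/(m-j)! Tφ_j` has a root `v` with `|v - t| ≤ C`. Let `s` be the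
largest excess `deg Tφ_j - j` and `b_j` the coefficient of `z^(j+s)` in `Tφ_j`. Dividing by
`t^(m+s)` and letting `t → ∞` along the reals (so that `v / t → 1`) gives
`∑_{j ≤ m} (-1)^(m-j)/(m-j)! b_j = 0` for `1 ≤ m ≤ n`, a triangular system whose solutions are
`b_j = b_0 / j!`. Some `b_j` is nonzero (for `s = 0` because `Tφ_0 ≠ 0`: otherwise the first
nonzero `Tφ_j` would have a root near every `t`), so `b_n ≠ 0`, which forces `s = 0`.
-/

open Polynomial

open Finset Filter Topology
open scoped Nat

section Algebra

variable {K : Type*} [Field K] [CharZero K]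

theorem C_inv_factorial_mul_X_sub_C_pow (t : K) (m : ℕ) :
    C (m ! : K)⁻¹ * (X - C t) ^ m =
      ∑ j ∈ range (m + 1), C ((-t) ^ (m - j) / (m - j)!) * (C (j ! : K)⁻¹ * X ^ j) := by
  rw [sub_eq_add_neg, ← C_neg, add_pow, mul_sum]
  refine sum_congr rfl fun j hj => ?_
  rw [← C_eq_natCast, Nat.cast_choose K (Nat.lt_succ_iff.mp (mem_range.mp hj)), ← C_pow]
  trans C ((m ! : K)⁻¹ * ((-t) ^ (m - j) * (m ! / (j ! * (m - j)!)))) * X ^ j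
  · simp only [C_mul]
    ring
  · rw [← mul_assoc (C _), ← C_mul]
    congr 2
    have : (m ! : K) ≠ 0 := Nat.cast_ne_zero.mpr m.factorial_ne_zero
    field_simp

theorem sum_neg_one_pow_div_factorial_mul_factorial {m : ℕ} (hm : 0 < m) :
    ∑ j ∈ range (m + 1), (-1 : K) ^ (m - j) / ((m - j)! * j !) = 0 := by
  have hbinom := (add_pow (1 : K) (-1) m).symm
  rw [add_neg_cancel, zero_pow hm.ne'] at hbinom
  rw [← mul_eq_zero_of_right ((m ! : K)⁻¹) hbinom, mul_sum]
  refine sum_congr rfl fun j hj => ?_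
  rw [Nat.cast_choose K (Nat.lt_succ_iff.mp (mem_range.mp hj)), one_pow, one_mul]
  have : (m ! : K) ≠ 0 := Nat.cast_ne_zero.mpr m.factorial_ne_zero
  field_simp

theorem eq_div_factorial_of_forall_sum_eq_zero {b : ℕ → K} {n : ℕ}
    (h : ∀ m, 0 < m → m ≤ n → ∑ j ∈ range (m + 1), (-1 : K) ^ (m - j) / (m - j)! * b j = 0) :
    ∀ m ≤ n, b m = b 0 / m ! := by
  intro m
  induction m using Nat.strong_induction_on with
  | _ m ih =>
    intro hmn
    rcases Nat.eq_zero_or_pos m with rfl | hm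
    · simp
    have hsum := h m hm hmn
    have hprev : ∀ j ∈ range m, (-1 : K) ^ (m - j) / (m - j)! * b j =
        b 0 * ((-1 : K) ^ (m - j) / ((m - j)! * j !)) := fun j hj => by
      rw [ih j (mem_range.mp hj) (by have := mem_range.mp hj; omega)]
      field_simp
    have halt := sum_neg_one_pow_div_factorial_mul_factorial (K := K) hm
    rw [sum_range_succ, sum_congr rfl hprev, ← mul_sum] at hsum
    rw [sum_range_succ] at halt
    simp only [Nat.sub_self, pow_zero, Nat.factorial_zero, Nat.cast_one, div_one, one_mul]
      at hsum halt
    linear_combination hsum - b 0 * halt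

end Algebra

section DegreeExcess

variable {R : Type*} [Semiring R]

noncomputable def degreeExcess (p : ℕ → R[X]) (n : ℕ) : ℕ :=
  (range (n + 1)).sup fun j => (p j).natDegree - j

theorem natDegree_le_add_degreeExcess (p : ℕ → R[X]) {n j : ℕ} (hj : j ≤ n) :
    (p j).natDegree ≤ j + degreeExcess p n := by
  have : (p j).natDegree - j ≤ degreeExcess p n :=
    le_sup (f := fun j => (p j).natDegree - j) (mem_range.mpr (Nat.lt_succ_of_le hj))
  omega

theorem exists_coeff_add_degreeExcess_ne_zero {p : ℕ → R[X]} (n : ℕ) (h0 : p 0 ≠ 0) :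
    ∃ j ≤ n, (p j).coeff (j + degreeExcess p n) ≠ 0 := by
  rcases Nat.eq_zero_or_pos (degreeExcess p n) with hσ | hσ
  · refine ⟨0, n.zero_le, ?_⟩
    have hdeg := natDegree_le_add_degreeExcess p n.zero_le
    rw [hσ, add_zero] at hdeg ⊢
    intro h
    exact h0 (by rw [eq_C_of_natDegree_le_zero hdeg, h, C_0])
  · obtain ⟨j, hj, hjσ⟩ := exists_mem_eq_sup (range (n + 1)) nonempty_range_add_one
      fun j => (p j).natDegree - j
    change degreeExcess p n = (p j).natDegree - j at hjσ
    have hpj : p j ≠ 0 := by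
      rintro hpj
      rw [hjσ, hpj, natDegree_zero, Nat.zero_sub] at hσ
      exact hσ.false
    refine ⟨j, Nat.lt_succ_iff.mp (mem_range.mp hj), ?_⟩
    rw [show j + degreeExcess p n = (p j).natDegree by omega]
    exact leadingCoeff_ne_zero.mpr hpj

end DegreeExcess

theorem tendsto_div_ofReal_of_norm_sub_le {v : ℝ → ℂ} {C : ℝ}
    (hv : ∀ t : ℝ, ‖(t : ℂ) - v t‖ ≤ C) :
    Tendsto (fun t : ℝ => v t / t) atTop (𝓝 1) := by
  rw [tendsto_iff_norm_sub_tendsto_zero]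
  refine squeeze_zero' (Eventually.of_forall fun _ => norm_nonneg _) ?_
    (tendsto_const_nhds.div_atTop tendsto_id : Tendsto (fun t : ℝ => C / t) atTop (𝓝 0))
  filter_upwards [eventually_gt_atTop 0] with t ht
  have ht' : (t : ℂ) ≠ 0 := by exact_mod_cast ht.ne'
  rw [div_sub_one ht', norm_div, norm_sub_rev, Complex.norm_real, Real.norm_of_nonneg ht.le]
  exact div_le_div_of_nonneg_right (hv t) ht.le

theorem tendsto_ofReal_inv_atTop : Tendsto (fun t : ℝ => (t : ℂ)⁻¹) atTop (𝓝 0) := by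
  simpa [Function.comp_def] using
    (Complex.continuous_ofReal.tendsto 0).comp tendsto_inv_atTop_zero

theorem eval_div_pow_eq_sum {K : Type*} [Field K] (p : K[X]) {d : ℕ} (hp : p.natDegree ≤ d)
    (x : K) {y : K} (hy : y ≠ 0) :
    p.eval x / y ^ d = ∑ k ∈ range (d + 1), p.coeff k * (x / y) ^ k * y⁻¹ ^ (d - k) := by
  rw [eval_eq_sum_range' (Nat.lt_succ_of_le hp), sum_div]
  refine sum_congr rfl fun k hk => ?_
  have hkd : k + (d - k) = d := Nat.add_sub_cancel' (Nat.lt_succ_iff.mp (mem_range.mp hk))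
  rw [div_pow, inv_pow]
  field_simp
  rw [mul_assoc, ← pow_add, hkd]

theorem tendsto_eval_div_pow (p : ℂ[X]) {d : ℕ} (hp : p.natDegree ≤ d) {v : ℝ → ℂ} {C : ℝ}
    (hv : ∀ t : ℝ, ‖(t : ℂ) - v t‖ ≤ C) :
    Tendsto (fun t : ℝ => p.eval (v t) / (t : ℂ) ^ d) atTop (𝓝 (p.coeff d)) := by
  have hlim : Tendsto
      (fun t : ℝ => ∑ k ∈ range (d + 1), p.coeff k * (v t / t) ^ k * (t : ℂ)⁻¹ ^ (d - k)) atTop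
      (𝓝 (∑ k ∈ range (d + 1), p.coeff k * 1 ^ k * 0 ^ (d - k))) :=
    tendsto_finsetSum _ fun k _ => (tendsto_const_nhds.mul
      ((tendsto_div_ofReal_of_norm_sub_le hv).pow k)).mul (tendsto_ofReal_inv_atTop.pow _)
  rw [sum_eq_single_of_mem d (self_mem_range_succ d) fun k hk hkd => by
    rw [zero_pow (by grind), mul_zero]] at hlim
  simp only [one_pow, mul_one, Nat.sub_self, pow_zero] at hlim
  refine hlim.congr' ?_
  filter_upwards [eventually_ne_atTop 0] with t ht
  exact (eval_div_pow_eq_sum p hp _ (by exact_mod_cast ht)).symm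

theorem eq_zero_of_forall_exists_isRoot_near (p : ℂ[X]) (C : ℝ)
    (h : ∀ t : ℝ, ∃ v, ‖(t : ℂ) - v‖ ≤ C ∧ p.IsRoot v) : p = 0 := by
  choose v hv hroot using h
  have hlim := tendsto_eval_div_pow p le_rfl hv
  simp only [(hroot _).eq_zero, zero_div] at hlim
  exact leadingCoeff_eq_zero.mp (tendsto_nhds_unique hlim tendsto_const_nhds)

theorem sum_coeff_eq_zero_of_forall_exists_root_near (p : ℕ → ℂ[X]) (m s : ℕ)
    (hp : ∀ j ≤ m, (p j).natDegree ≤ j + s) (C : ℝ)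
    (h : ∀ t : ℝ, ∃ v, ‖(t : ℂ) - v‖ ≤ C ∧
      ∑ j ∈ range (m + 1), (-(t : ℂ)) ^ (m - j) / (m - j)! * (p j).eval v = 0) :
    ∑ j ∈ range (m + 1), (-1 : ℂ) ^ (m - j) / (m - j)! * (p j).coeff (j + s) = 0 := by
  choose v hv hroot using h
  have hlim : Tendsto (fun t : ℝ => ∑ j ∈ range (m + 1),
      (-1 : ℂ) ^ (m - j) / (m - j)! * ((p j).eval (v t) / (t : ℂ) ^ (j + s))) atTop
      (𝓝 (∑ j ∈ range (m + 1), (-1 : ℂ) ^ (m - j) / (m - j)! * (p j).coeff (j + s))) :=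
    tendsto_finsetSum _ fun j hj =>
      (tendsto_eval_div_pow _ (hp j (Nat.lt_succ_iff.mp (mem_range.mp hj))) hv).const_mul _
  refine tendsto_nhds_unique hlim (tendsto_const_nhds.congr' ?_)
  filter_upwards [eventually_ne_atTop 0] with t ht
  have ht' : (t : ℂ) ≠ 0 := by exact_mod_cast ht
  rw [← zero_div ((t : ℂ) ^ (m + s)), ← hroot t, sum_div]
  refine sum_congr rfl fun j hj => ?_
  have hjm : m - j + (j + s) = m + s := by have := mem_range.mp hj; omega
  rw [neg_pow, ← hjm, pow_add]
  field_simp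

noncomputable def phi (n j : ℕ) : Pn n := if h : j ≤ n then phiP n j h else 0

theorem phi_of_le {n j : ℕ} (h : j ≤ n) : phi n j = phiP n j h := dif_pos h

theorem natDegree_le_of_mem_Pn {n : ℕ} (f : Pn n) : (f : ℂ[X]).natDegree ≤ n :=
  natDegree_le_iff_degree_le.mpr (mem_degreeLE.mp (degreeLT_succ_eq_degreeLE (R := ℂ) ▸ f.2))

noncomputable def basisPn (n : ℕ) : Module.Basis (Fin (n + 1)) ℂ (Pn n) :=
  degreeLT.basis ℂ (n + 1)

theorem coe_basisPn {n : ℕ} (i : Fin (n + 1)) : (basisPn n i : ℂ[X]) = X ^ (i : ℕ) :=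
  degreeLT.basis_val i

theorem phiP_eq_inv_factorial_smul_basisPn {n j : ℕ} (h : j ≤ n) :
    phiP n j h = (j ! : ℂ)⁻¹ • basisPn n ⟨j, Nat.lt_succ_of_le h⟩ := by
  ext1
  simp [phiP, coe_basisPn, smul_eq_C_mul]

theorem coe_sum_smul_phi {n m : ℕ} (hm : m ≤ n) (t : ℂ) :
    ((∑ j ∈ range (m + 1), ((-t) ^ (m - j) / (m - j)!) • phi n j : Pn n) : ℂ[X]) =
      C (m ! : ℂ)⁻¹ * (X - C t) ^ m := by
  rw [C_inv_factorial_mul_X_sub_C_pow, Submodule.coe_sum]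
  refine sum_congr rfl fun j hj => ?_
  rw [phi_of_le ((Nat.lt_succ_iff.mp (mem_range.mp hj)).trans hm), Submodule.coe_smul,
    smul_eq_C_mul]
  rfl

section Operator

variable {n : ℕ} (T : Module.End ℂ (Pn n))

noncomputable def phiImage (j : ℕ) : ℂ[X] := T (phi n j)

theorem natDegree_phiImage_le (j : ℕ) : (phiImage T j).natDegree ≤ n :=
  natDegree_le_of_mem_Pn _

theorem exists_phiImage_ne_zero (hT : T ≠ 0) : ∃ j ≤ n, phiImage T j ≠ 0 := by
  by_contra! h
  refine hT ((basisPn n).ext fun i => ?_)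
  have hi := h i (Nat.lt_succ_iff.mp i.2)
  rw [phiImage, phi_of_le (Nat.lt_succ_iff.mp i.2), phiP_eq_inv_factorial_smul_basisPn,
    map_smul, ZeroMemClass.coe_eq_zero, smul_eq_zero] at hi
  simpa [Nat.factorial_ne_zero] using hi

variable {T} {C : ℝ}
  (hyp : ∀ f : Pn n, 0 < (f : ℂ[X]).degree →
    ∃ u v, (f : ℂ[X]).IsRoot u ∧ ((T f : Pn n) : ℂ[X]).IsRoot v ∧ ‖u - v‖ ≤ C)
include hyp

theorem exists_root_image_X_sub_C_pow_near {m : ℕ} (hm : 0 < m) (hmn : m ≤ n) (t : ℂ) :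
    ∃ v, ‖t - v‖ ≤ C ∧
      ∑ j ∈ range (m + 1), (-t) ^ (m - j) / (m - j)! * (phiImage T j).eval v = 0 := by
  set F : Pn n := ∑ j ∈ range (m + 1), ((-t) ^ (m - j) / (m - j)!) • phi n j
  have hF := coe_sum_smul_phi hmn t
  have hfact : (m ! : ℂ)⁻¹ ≠ 0 := inv_ne_zero (Nat.cast_ne_zero.mpr m.factorial_ne_zero)
  obtain ⟨u, v, hu, hv, huv⟩ := hyp F (by
    rw [hF, degree_C_mul hfact, degree_pow, degree_X_sub_C, nsmul_one]
    exact_mod_cast hm)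
  have hut : u = t := by
    rw [hF, IsRoot, eval_mul, eval_C, mul_eq_zero, eval_pow, pow_eq_zero_iff hm.ne', eval_sub,
      eval_X, eval_C, sub_eq_zero] at hu
    exact hu.resolve_left hfact
  refine ⟨v, hut ▸ huv, ?_⟩
  simpa [F, map_sum, phiImage, smul_eq_C_mul, eval_finsetSum] using hv

theorem phiImage_zero_ne_zero (hT : T ≠ 0) : phiImage T 0 ≠ 0 := by
  classical
  have hex := exists_phiImage_ne_zero T hT
  obtain ⟨j₀, ⟨hj₀n, hj₀⟩, hmin⟩ : ∃ j₀, (j₀ ≤ n ∧ phiImage T j₀ ≠ 0) ∧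
      ∀ j < j₀, ¬(j ≤ n ∧ phiImage T j ≠ 0) :=
    ⟨Nat.find hex, Nat.find_spec hex, fun _ => Nat.find_min hex⟩
  rcases Nat.eq_zero_or_pos j₀ with rfl | hpos
  · exact hj₀
  have hlower : ∀ j < j₀, phiImage T j = 0 := fun j hj => by
    by_contra hne
    exact hmin j hj ⟨hj.le.trans hj₀n, hne⟩
  refine absurd (eq_zero_of_forall_exists_isRoot_near _ C fun t => ?_) hj₀
  obtain ⟨v, hv, hroot⟩ := exists_root_image_X_sub_C_pow_near hyp hpos hj₀n t
  rw [sum_range_succ, sum_eq_zero fun j hj => by rw [hlower j (mem_range.mp hj), eval_zero,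
    mul_zero], zero_add] at hroot
  exact ⟨v, hv, by simpa using hroot⟩

theorem exists_coeff_phiImage_eq_div_factorial (hT : T ≠ 0) :
    ∃ a₀ : ℂ, a₀ ≠ 0 ∧
      ∀ m ≤ n, (phiImage T m).natDegree ≤ m ∧ (phiImage T m).coeff m = a₀ / m ! := by
  have hdeg : ∀ j ≤ n, (phiImage T j).natDegree ≤ j + degreeExcess (phiImage T) n :=
    fun j hj => natDegree_le_add_degreeExcess _ hj
  have hex := exists_coeff_add_degreeExcess_ne_zero n (phiImage_zero_ne_zero hyp hT)
  generalize degreeExcess (phiImage T) n = σ at hdeg hex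
  have hb : ∀ m ≤ n, (phiImage T m).coeff (m + σ) = (phiImage T 0).coeff σ / m ! := by
    simpa using eq_div_factorial_of_forall_sum_eq_zero
      (b := fun j => (phiImage T j).coeff (j + σ)) fun m hm hmn =>
        sum_coeff_eq_zero_of_forall_exists_root_near _ m σ (fun j hj => hdeg j (hj.trans hmn)) C
          (exists_root_image_X_sub_C_pow_near hyp hm hmn ·)
  have hb0 : (phiImage T 0).coeff σ ≠ 0 := by
    obtain ⟨j, hj, hne⟩ := hex
    rw [hb j hj] at hne
    exact left_ne_zero_of_mul hne
  obtain rfl : σ = 0 := by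
    by_contra hσ
    refine div_ne_zero hb0 (Nat.cast_ne_zero.mpr n.factorial_ne_zero) ?_
    rw [← hb n le_rfl]
    exact coeff_eq_zero_of_natDegree_lt (by have := natDegree_phiImage_le T n; omega)
  exact ⟨_, hb0, fun m hm => ⟨hdeg m hm, hb m hm⟩⟩

end Operator

theorem deg_T_phi_eq_and_diag_const_general (n : ℕ)
    (T : Module.End ℂ (Pn n)) (hT : T ≠ 0) (C : ℝ)
    (hyp : ∀ f : Pn n, 0 < (f : Polynomial ℂ).degree →
      ∃ u v, (f : Polynomial ℂ).IsRoot u ∧ ((T f : Pn n) : Polynomial ℂ).IsRoot v ∧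
        ‖u - v‖ ≤ C) :
    ∃ a₀ : ℂ, a₀ ≠ 0 ∧ T (phiP n 0 (Nat.zero_le n)) = a₀ • phiP n 0 (Nat.zero_le n) ∧
      ∀ m (h : m ≤ n),
        ((T (phiP n m h) : Pn n) : Polynomial ℂ).degree = (m : ℕ) ∧
        (Nat.factorial m : ℂ) * ((T (phiP n m h) : Pn n) : Polynomial ℂ).coeff m = a₀ := by
  obtain ⟨a₀, ha₀, himage⟩ := exists_coeff_phiImage_eq_div_factorial hyp hT
  refine ⟨a₀, ha₀, ?_, fun m hm => ?_⟩
  · obtain ⟨hdeg, hcoeff⟩ := himage 0 n.zero_le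
    rw [phiImage, phi_of_le n.zero_le] at hdeg hcoeff
    ext1
    rw [eq_C_of_natDegree_le_zero hdeg, hcoeff]
    simp [phiP, smul_eq_C_mul]
  · obtain ⟨hdeg, hcoeff⟩ := himage m hm
    rw [phiImage, phi_of_le hm] at hdeg hcoeff
    have hfact : (m ! : ℂ) ≠ 0 := Nat.cast_ne_zero.mpr m.factorial_ne_zero
    refine ⟨degree_eq_of_le_of_coeff_ne_zero (degree_le_of_natDegree_le hdeg) ?_, ?_⟩
    · rw [hcoeff]
      exact div_ne_zero ha₀ hfact
    · rw [hcoeff]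
      field_simp

/-- If a nonzero linear operator `T` on `P_n` is such that for some `C > 0` every
nonconstant `f ∈ P_n` has a root within distance `C` of some root of `Tf`, then
`deg(Tφ_m) = m` for every `m ≤ n`; in particular the matrix of `T` in the basis
`{φ_0, …, φ_n}` is upper triangular with all diagonal entries equal to the nonzero
constant `Tφ_0` (the diagonal entry being `m! ⬝ (coeff m of Tφ_m)`). -/
theorem deg_T_phi_eq_and_diag_const (n : ℕ) (hn : 0 < n)
    (T : Module.End ℂ (Pn n)) (hT : T ≠ 0) (C : ℝ) (hC : 0 < C)
    (hyp : ∀ f : Pn n, 0 < (f : Polynomial ℂ).degree →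
      ∃ u v, (f : Polynomial ℂ).IsRoot u ∧ ((T f : Pn n) : Polynomial ℂ).IsRoot v ∧
        ‖u - v‖ ≤ C) :
    ∃ a₀ : ℂ, a₀ ≠ 0 ∧ T (phiP n 0 (Nat.zero_le n)) = a₀ • phiP n 0 (Nat.zero_le n) ∧
      ∀ m (h : m ≤ n),
        ((T (phiP n m h) : Pn n) : Polynomial ℂ).degree = (m : ℕ) ∧
        (Nat.factorial m : ℂ) * ((T (phiP n m h) : Pn n) : Polynomial ℂ).coeff m = a₀ :=
  deg_T_phi_eq_and_diag_const_general n T hT C hyp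
end
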